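/- arXiv:1003.0038 — 3 statements merged into one kernel-verified Lean document; each statement's English description precedes it below -/
import Mathlib

section
/- Let vec : L(X, Y) → Y ⊗ X be the isomorphism defined on standard basis elements by vec(f_j e_i*) = f_j ⊗ e_i. Then for any operators A : X → Y and B : Y → X, the partial trace over X of vec(A)·vec(B)* equals A B*, and the partial trace over Y of vec(A)·vec(B)* equals (B* A)ᵀ. -/
open Matrix

/-- The operator-vector isomorphism `vec(f_j e_i*) = f_j ⊗ e_i`. -/
def vec {dx dy : ℕ} (A : Matrix (Fin dy) (Fin dx) ℂ) : Fin dy × Fin dx → ℂ :=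
  fun p => A p.1 p.2

/-- The rank-one operator `vec(A) · vec(B)*` on `Y ⊗ X`. -/
def vecOuter {dx dy : ℕ} (A B : Matrix (Fin dy) (Fin dx) ℂ) :
    Matrix (Fin dy × Fin dx) (Fin dy × Fin dx) ℂ :=
  fun p q => vec A p * star (vec B q)

/-- Partial trace over the first (`Y`) tensor factor. -/
noncomputable def ptraceFst {α β : Type*} [Fintype α] (M : Matrix (α × β) (α × β) ℂ) :
    Matrix β β ℂ := fun i j => ∑ a, M (a, i) (a, j)

/-- Partial trace over the second (`X`) tensor factor. -/
noncomputable def ptraceSnd {α β : Type*} [Fintype β] (M : Matrix (α × β) (α × β) ℂ) :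
    Matrix α α ℂ := fun a b => ∑ i, M (a, i) (b, i)

@[simp]
theorem vecOuter_apply {dx dy : ℕ} (A B : Matrix (Fin dy) (Fin dx) ℂ) (p q : Fin dy × Fin dx) :
    vecOuter A B p q = A p.1 p.2 * star (B q.1 q.2) :=
  rfl

theorem ptraceSnd_vecOuter {dx dy : ℕ} (A B : Matrix (Fin dy) (Fin dx) ℂ) :
    ptraceSnd (vecOuter A B) = A * Bᴴ :=
  rfl

theorem ptraceFst_vecOuter {dx dy : ℕ} (A B : Matrix (Fin dy) (Fin dx) ℂ) :
    ptraceFst (vecOuter A B) = (Bᴴ * A)ᵀ := by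
  ext i j
  simp only [ptraceFst, vecOuter_apply, transpose_apply, mul_apply, conjTranspose_apply, mul_comm]

/-- `Tr_X(vec(A)vec(B)*) = A B*` and `Tr_Y(vec(A)vec(B)*) = (B* A)ᵀ`. -/
theorem ptrace_vecOuter {dx dy : ℕ} (A B : Matrix (Fin dy) (Fin dx) ℂ) :
    ptraceSnd (vecOuter A B) = A * Bᴴ ∧
    ptraceFst (vecOuter A B) = (Bᴴ * A)ᵀ :=
  ⟨ptraceSnd_vecOuter A B, ptraceFst_vecOuter A B⟩
end

section
/- Let S₁, …, S_m be subspaces of Hermitian operators each containing the identity. If P = P₁ ⊗ ⋯ ⊗ P_m is a product operator with each P_i ∈ S_i positive semidefinite, then ‖P‖·I − P is (S₁;…;S_m)-separable, i.e., it is a sum of product operators Q₁ ⊗ ⋯ ⊗ Q_m with each Q_i ∈ S_i positive semidefinite. -/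
open Matrix
open scoped ComplexOrder

variable {m : ℕ} {d : Fin m → ℕ}

/-- The elementary tensor product of matrices `P i`, as a matrix on the product space. -/
def prodMat (P : ∀ i, Matrix (Fin (d i)) (Fin (d i)) ℂ) :
    Matrix (∀ i, Fin (d i)) (∀ i, Fin (d i)) ℂ :=
  Matrix.of fun p q => ∏ i, P i (p i) (q i)

/-- The subspace `S₁ ⊗ ⋯ ⊗ S_m`, i.e. the real span of elementary tensor products of
elements of the subspaces `S i`. -/
noncomputable def tensorSpan (S : ∀ i, Submodule ℝ (Matrix (Fin (d i)) (Fin (d i)) ℂ)) :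
    Submodule ℝ (Matrix (∀ i, Fin (d i)) (∀ i, Fin (d i)) ℂ) :=
  Submodule.span ℝ {X | ∃ P : ∀ i, Matrix (Fin (d i)) (Fin (d i)) ℂ,
    (∀ i, P i ∈ S i) ∧ X = prodMat P}

/-- `(S₁;…;S_m)`-separability: a finite sum of elementary tensor products of positive
semidefinite elements of the subspaces `S i`. -/
def IsSep (S : ∀ i, Submodule ℝ (Matrix (Fin (d i)) (Fin (d i)) ℂ))
    (X : Matrix (∀ i, Fin (d i)) (∀ i, Fin (d i)) ℂ) : Prop :=
  ∃ (k : ℕ) (P : Fin k → ∀ i, Matrix (Fin (d i)) (Fin (d i)) ℂ),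
    (∀ j i, P j i ∈ S i ∧ (P j i).PosSemidef) ∧ X = ∑ j, prodMat (P j)

/-- The operator (spectral) norm of a complex matrix. -/
noncomputable def opNorm {n : Type*} [Fintype n] [DecidableEq n] (A : Matrix n n ℂ) : ℝ :=
  ‖Matrix.toEuclideanCLM (𝕜 := ℂ) A‖

/-- The Frobenius norm of a complex matrix. -/
noncomputable def frobNorm {n : Type*} [Fintype n] (A : Matrix n n ℂ) : ℝ :=
  Real.sqrt (∑ p, ∑ q, ‖A p q‖ ^ 2)

/-! With `cᵢ = ‖Pᵢ‖`, telescoping gives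
`(∏ cᵢ) • I - P₁ ⊗ ⋯ ⊗ P_m = ∑ₖ c₁I ⊗ ⋯ ⊗ cₖ₋₁I ⊗ (cₖI - Pₖ) ⊗ Pₖ₊₁ ⊗ ⋯ ⊗ P_m`,
and every factor is a positive semidefinite element of its `Sᵢ`, since `Pₖ ≤ ‖Pₖ‖ • I`.
It remains to see that `‖P‖ = ∏ ‖Pᵢ‖`. Evaluating `P` on a tensor product of norm-attaining
vectors gives `≥`; the decomposition itself, taken with every `Sᵢ` the whole space, shows
`0 ≤ P ≤ (∏ cᵢ) • I`, whence `≤`. -/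

theorem Fintype.prod_sub_prod_eq_sum_prod {ι R : Type*} [CommRing R] [Fintype ι] [LinearOrder ι]
    (a b : ι → R) :
    ∏ i, a i - ∏ i, b i =
      ∑ k, ∏ i, if i < k then a i else if i = k then a i - b i else b i := by
  have h := Finset.prod_add_ordered Finset.univ b (a - b)
  simp only [Pi.sub_apply, add_sub_cancel] at h
  rw [h, add_sub_cancel_left]
  refine Finset.sum_congr rfl fun k _ => ?_
  have hk : ∀ i, (¬i < k ∧ i = k) ↔ i = k := fun i => ⟨And.right, fun h => ⟨h.not_lt, h⟩⟩
  have hgt : ∀ i, (¬i < k ∧ ¬i = k) ↔ k < i := fun i => by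
    rw [not_lt, ← ne_eq, ne_comm, lt_iff_le_and_ne]
  rw [Finset.prod_ite, Finset.prod_ite, Finset.filter_filter, Finset.filter_filter]
  simp only [hk, hgt, Finset.filter_eq', Finset.mem_univ, if_true, Finset.prod_singleton]
  ring

theorem ContinuousLinearMap.exists_norm_le_one_norm_apply_eq_opNorm {𝕜 E F : Type*}
    [DenselyNormedField 𝕜]
    [NormedAddCommGroup E] [NormedSpace 𝕜 E] [ProperSpace E]
    [NormedAddCommGroup F] [NormedSpace 𝕜 F] (f : E →L[𝕜] F) :
    ∃ x, ‖x‖ ≤ 1 ∧ ‖f x‖ = ‖f‖ := by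
  have hK := (isCompact_closedBall (0 : E) 1).image (continuous_norm.comp f.continuous)
  obtain ⟨x, hx, hfx⟩ := hK.sSup_mem ((Metric.nonempty_closedBall.2 zero_le_one).image _)
  exact ⟨x, mem_closedBall_zero_iff.1 hx, hfx.trans f.sSup_unitClosedBall_eq_norm⟩

section TensorVec

variable {𝕜 ι : Type*} [RCLike 𝕜] [Fintype ι] [DecidableEq ι] {κ : ι → Type*} [∀ i, Fintype (κ i)]

def tensorVec (x : ∀ i, EuclideanSpace 𝕜 (κ i)) : EuclideanSpace 𝕜 (∀ i, κ i) :=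
  WithLp.toLp 2 fun p => ∏ i, x i (p i)

theorem norm_tensorVec (x : ∀ i, EuclideanSpace 𝕜 (κ i)) : ‖tensorVec x‖ = ∏ i, ‖x i‖ := by
  have hsq : ‖tensorVec x‖ ^ 2 = (∏ i, ‖x i‖) ^ 2 := by
    simp only [EuclideanSpace.norm_sq_eq, tensorVec, norm_prod, ← Finset.prod_pow,
      Finset.prod_univ_sum, Fintype.piFinset_univ]
  exact (pow_left_inj₀ (norm_nonneg _) (Finset.prod_nonneg fun i _ => norm_nonneg _)
    two_ne_zero).mp hsq

end TensorVec

theorem prodMat_mul (A B : ∀ i, Matrix (Fin (d i)) (Fin (d i)) ℂ) :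
    prodMat (fun i => A i * B i) = prodMat A * prodMat B := by
  ext p r
  simp only [prodMat, of_apply, mul_apply, Finset.prod_univ_sum, Fintype.piFinset_univ,
    Finset.prod_mul_distrib]

theorem prodMat_conjTranspose (A : ∀ i, Matrix (Fin (d i)) (Fin (d i)) ℂ) :
    (prodMat A)ᴴ = prodMat fun i => (A i)ᴴ := by
  ext p q
  simp only [prodMat, conjTranspose_apply, of_apply, star_prod]

theorem prodMat_one : prodMat (fun i => (1 : Matrix (Fin (d i)) (Fin (d i)) ℂ)) = 1 := by
  ext p q
  simp only [prodMat, of_apply, one_apply, Finset.prod_boole, funext_iff, Finset.mem_univ,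
    forall_true_left]

theorem prodMat_smul (c : Fin m → ℝ) (A : ∀ i, Matrix (Fin (d i)) (Fin (d i)) ℂ) :
    prodMat (fun i => c i • A i) = (∏ i, c i) • prodMat A := by
  ext p q
  simp only [prodMat, of_apply, Matrix.smul_apply, Complex.real_smul, Finset.prod_mul_distrib,
    Complex.ofReal_prod]

theorem prodMat_sub_prodMat (A B : ∀ i, Matrix (Fin (d i)) (Fin (d i)) ℂ) :
    prodMat A - prodMat B =
      ∑ k, prodMat fun i => if i < k then A i else if i = k then A i - B i else B i := by
  ext p q
  simp only [prodMat, Matrix.sub_apply, Matrix.sum_apply, of_apply]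
  convert Fintype.prod_sub_prod_eq_sum_prod (fun i => A i (p i) (q i)) (fun i => B i (p i) (q i))
    using 4 with k - i
  split_ifs <;> rfl

theorem toEuclideanCLM_prodMat_tensorVec (A : ∀ i, Matrix (Fin (d i)) (Fin (d i)) ℂ)
    (x : ∀ i, EuclideanSpace ℂ (Fin (d i))) :
    toEuclideanCLM (𝕜 := ℂ) (prodMat A) (tensorVec x) =
      tensorVec fun i => toEuclideanCLM (𝕜 := ℂ) (A i) (x i) := by
  ext p
  simp only [tensorVec, toEuclideanCLM_toLp, ofLp_toEuclideanCLM, mulVec, dotProduct, prodMat,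
    of_apply, Finset.prod_univ_sum, Fintype.piFinset_univ, Finset.prod_mul_distrib]

section MatrixOrder

open scoped MatrixOrder Matrix.Norms.L2Operator

-- In this scope `‖A‖` is `opNorm A` by definition, and matrices form a C⋆-algebra.

theorem prodMat_posSemidef {A : ∀ i, Matrix (Fin (d i)) (Fin (d i)) ℂ}
    (hA : ∀ i, (A i).PosSemidef) : (prodMat A).PosSemidef := by
  choose B hB using fun i => CStarAlgebra.nonneg_iff_eq_star_mul_self.mp (hA i).nonneg
  simp only [funext hB, star_eq_conjTranspose, prodMat_mul, ← prodMat_conjTranspose]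
  exact posSemidef_conjTranspose_mul_self _

theorem posSemidef_opNorm_smul_one_sub {n : Type*} [Fintype n] [DecidableEq n]
    {A : Matrix n n ℂ} (hA : A.IsHermitian) : (opNorm A • (1 : Matrix n n ℂ) - A).PosSemidef := by
  have h := IsSelfAdjoint.le_algebraMap_norm_self hA
  rwa [Algebra.algebraMap_eq_smul_one] at h

theorem opNorm_le_of_posSemidef_smul_one_sub {n : Type*} [Fintype n] [DecidableEq n]
    {A : Matrix n n ℂ} (hA : A.PosSemidef) {r : ℝ} (hr : 0 ≤ r)
    (h : (r • (1 : Matrix n n ℂ) - A).PosSemidef) : opNorm A ≤ r :=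
  (CStarAlgebra.norm_le_iff_le_algebraMap A hr hA.nonneg).2 <| by
    rwa [Algebra.algebraMap_eq_smul_one]

end MatrixOrder

theorem IsSep.posSemidef {S : ∀ i, Submodule ℝ (Matrix (Fin (d i)) (Fin (d i)) ℂ)}
    {X : Matrix (∀ i, Fin (d i)) (∀ i, Fin (d i)) ℂ} (h : IsSep S X) : X.PosSemidef := by
  obtain ⟨k, P, hP, rfl⟩ := h
  exact posSemidef_sum _ fun j _ => prodMat_posSemidef fun i => (hP j i).2

theorem isSep_prod_opNorm_smul_one_sub_prodMat
    (S : ∀ i, Submodule ℝ (Matrix (Fin (d i)) (Fin (d i)) ℂ))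
    (hone : ∀ i, (1 : Matrix (Fin (d i)) (Fin (d i)) ℂ) ∈ S i)
    (P : ∀ i, Matrix (Fin (d i)) (Fin (d i)) ℂ) (hP : ∀ i, P i ∈ S i ∧ (P i).PosSemidef) :
    IsSep S ((∏ i, opNorm (P i)) • (1 : Matrix (∀ i, Fin (d i)) (∀ i, Fin (d i)) ℂ)
      - prodMat P) := by
  rw [← prodMat_one, ← prodMat_smul, prodMat_sub_prodMat]
  refine ⟨m, _, fun k i => ?_, rfl⟩
  have hc : opNorm (P i) • 1 ∈ S i := (S i).smul_mem _ (hone i)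
  split_ifs
  · exact ⟨hc, PosSemidef.smul PosSemidef.one (norm_nonneg _)⟩
  · exact ⟨(S i).sub_mem hc (hP i).1, posSemidef_opNorm_smul_one_sub (hP i).2.1⟩
  · exact hP i

theorem prod_opNorm_le_opNorm_prodMat (P : ∀ i, Matrix (Fin (d i)) (Fin (d i)) ℂ) :
    ∏ i, opNorm (P i) ≤ opNorm (prodMat P) := by
  choose x hx1 hx using fun i =>
    (toEuclideanCLM (𝕜 := ℂ) (P i)).exists_norm_le_one_norm_apply_eq_opNorm
  calc ∏ i, opNorm (P i) = ‖toEuclideanCLM (𝕜 := ℂ) (prodMat P) (tensorVec x)‖ := by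
        rw [toEuclideanCLM_prodMat_tensorVec, norm_tensorVec]
        exact Finset.prod_congr rfl fun i _ => (hx i).symm
    _ ≤ opNorm (prodMat P) * ‖tensorVec x‖ := ContinuousLinearMap.le_opNorm _ _
    _ ≤ opNorm (prodMat P) := by
        rw [norm_tensorVec]
        exact mul_le_of_le_one_right (norm_nonneg _)
          (Finset.prod_le_one (fun i _ => norm_nonneg _) fun i _ => hx1 i)

theorem opNorm_prodMat {P : ∀ i, Matrix (Fin (d i)) (Fin (d i)) ℂ}
    (hP : ∀ i, (P i).PosSemidef) : opNorm (prodMat P) = ∏ i, opNorm (P i) := by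
  refine le_antisymm (opNorm_le_of_posSemidef_smul_one_sub (prodMat_posSemidef hP)
    (Finset.prod_nonneg fun i _ => norm_nonneg _) ?_) (prod_opNorm_le_opNorm_prodMat P)
  exact (isSep_prod_opNorm_smul_one_sub_prodMat (fun _ => ⊤) (fun _ => trivial) P
    fun i => ⟨trivial, hP i⟩).posSemidef

theorem opNorm_smul_one_sub_prod_isSep_general {m : ℕ} {d : Fin m → ℕ}
    (S : ∀ i, Submodule ℝ (Matrix (Fin (d i)) (Fin (d i)) ℂ))
    (hone : ∀ i, (1 : Matrix (Fin (d i)) (Fin (d i)) ℂ) ∈ S i)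
    (P : ∀ i, Matrix (Fin (d i)) (Fin (d i)) ℂ)
    (hP : ∀ i, P i ∈ S i ∧ (P i).PosSemidef) :
    IsSep S (opNorm (prodMat P) • (1 : Matrix (∀ i, Fin (d i)) (∀ i, Fin (d i)) ℂ)
      - prodMat P) := by
  rw [opNorm_prodMat fun i => (hP i).2]
  exact isSep_prod_opNorm_smul_one_sub_prodMat S hone P hP

/-- If `P = P₁ ⊗ ⋯ ⊗ P_m` is an elementary tensor product with each `P i ∈ S i`
positive semidefinite, then `‖P‖·I − P` is `(S₁;…;S_m)`-separable. -/
theorem opNorm_smul_one_sub_prod_isSep {m : ℕ} {d : Fin m → ℕ}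
    (S : ∀ i, Submodule ℝ (Matrix (Fin (d i)) (Fin (d i)) ℂ))
    (hherm : ∀ i, ∀ A ∈ S i, A.IsHermitian)
    (hone : ∀ i, (1 : Matrix (Fin (d i)) (Fin (d i)) ℂ) ∈ S i)
    (P : ∀ i, Matrix (Fin (d i)) (Fin (d i)) ℂ)
    (hP : ∀ i, P i ∈ S i ∧ (P i).PosSemidef) :
    IsSep S (opNorm (prodMat P) • (1 : Matrix (∀ i, Fin (d i)) (∀ i, Fin (d i)) ℂ)
      - prodMat P) :=
  opNorm_smul_one_sub_prod_isSep_general S hone P hP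
end

section
/- Let Ψ : L(X ⊗ E) → L(A), Z ∈ L(E), and let φ : L(A ⊗ X) → ℂ be a linear functional. Define Λ : L(X) → L(A) by Λ(X) = Ψ(X ⊗ Z). Then φ(J(Λ)) = ⟨conj(Z), (φ ⊗ id_{L(E)})(J(Ψ))⟩, where conj(Z) denotes the entrywise complex conjugate of Z in the standard basis and ⟨A,B⟩ = tr(A*B). -/
open Matrix
open scoped Kronecker

/-- The Choi matrix of `Ψ : L(X ⊗ E) → L(A)`, as an operator on `(A ⊗ X) ⊗ E`. -/
noncomputable def ChoiPsi {dx de da : ℕ}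
    (Ψ : Matrix (Fin dx × Fin de) (Fin dx × Fin de) ℂ →ₗ[ℂ] Matrix (Fin da) (Fin da) ℂ) :
    Matrix ((Fin da × Fin dx) × Fin de) ((Fin da × Fin dx) × Fin de) ℂ :=
  fun p q => Ψ (Matrix.single (p.1.2, p.2) (q.1.2, q.2) 1) p.1.1 q.1.1

/-- The Choi matrix of `Λ : L(X) → L(A)`, `Λ(X) = Ψ(X ⊗ Z)`. -/
noncomputable def ChoiLam {dx de da : ℕ}
    (Ψ : Matrix (Fin dx × Fin de) (Fin dx × Fin de) ℂ →ₗ[ℂ] Matrix (Fin da) (Fin da) ℂ)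
    (Z : Matrix (Fin de) (Fin de) ℂ) :
    Matrix (Fin da × Fin dx) (Fin da × Fin dx) ℂ :=
  fun p q => Ψ (Matrix.single p.2 q.2 1 ⊗ₖ Z) p.1 q.1

/-- Applying `φ ⊗ id_{L(E)}` to `J(Ψ)`: the operator on `E` whose `(e, e')` entry is
`φ` applied to the corresponding `A ⊗ X` block of `J(Ψ)`. -/
noncomputable def phiTensorId {dx de da : ℕ}
    (φ : Matrix (Fin da × Fin dx) (Fin da × Fin dx) ℂ →ₗ[ℂ] ℂ)
    (Ψ : Matrix (Fin dx × Fin de) (Fin dx × Fin de) ℂ →ₗ[ℂ] Matrix (Fin da) (Fin da) ℂ) :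
    Matrix (Fin de) (Fin de) ℂ :=
  Matrix.of fun e e' => φ (Matrix.of fun p q => ChoiPsi Ψ (p, e) (q, e'))

/-!
Writing `Z = ∑ Z e e' • E_{e e'}`, linearity of `Ψ` turns `J(Λ)` into `∑ Z e e' • J(Ψ)_{e e'}`,
where `J(Ψ)_{e e'}` is the `(e, e')` block of `J(Ψ)` over `A ⊗ X`. Applying `φ` gives
`∑ Z e e' * ((φ ⊗ id)(J(Ψ))) e e'`, which is the trace pairing with `conj(Z)ᴴ = Zᵀ`.
-/

namespace Matrix

variable {l m n p α : Type*} [Fintype n] [Fintype p]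

theorem single_kronecker_eq_sum_single [DecidableEq l] [DecidableEq m] [DecidableEq n]
    [DecidableEq p] [CommSemiring α] (i : l) (j : m) (a : α) (B : Matrix n p α) :
    single i j a ⊗ₖ B = ∑ k, ∑ k', B k k' • single (i, k) (j, k') a := by
  conv_lhs => rw [matrix_eq_sum_single B]
  change kroneckerBilinear (R := α) (single i j a) (∑ k, ∑ k', single k k' (B k k')) = _
  simp only [map_sum]
  exact Finset.sum_congr rfl fun k _ => Finset.sum_congr rfl fun k' _ =>
    (single_kronecker_single i j k k' a (B k k')).trans <| by
      rw [smul_single, smul_eq_mul, mul_comm]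

theorem trace_map_starRingEnd_conjTranspose_mul [CommSemiring α] [StarRing α]
    (A B : Matrix n p α) :
    ((A.map (starRingEnd α))ᴴ * B).trace = ∑ k, ∑ k', A k k' * B k k' := by
  simp only [trace, diag_apply, mul_apply, conjTranspose_apply, map_apply, starRingEnd_apply,
    star_star]
  exact Finset.sum_comm

end Matrix

theorem choiLam_eq_sum_smul {dx de da : ℕ}
    (Ψ : Matrix (Fin dx × Fin de) (Fin dx × Fin de) ℂ →ₗ[ℂ] Matrix (Fin da) (Fin da) ℂ)
    (Z : Matrix (Fin de) (Fin de) ℂ) :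
    ChoiLam Ψ Z = ∑ e, ∑ e', Z e e' • Matrix.of fun p q => ChoiPsi Ψ (p, e) (q, e') := by
  ext p q
  simp only [ChoiLam, ChoiPsi, single_kronecker_eq_sum_single,
    map_sum, Matrix.sum_apply, Matrix.smul_apply, of_apply, map_smul]

/-- For `Λ(X) = Ψ(X ⊗ Z)` and any linear functional `φ` on `L(A ⊗ X)`:
`φ(J(Λ)) = ⟨conj(Z), (φ ⊗ id_{L(E)})(J(Ψ))⟩` with `⟨A, B⟩ = tr(Aᴴ B)`. -/
theorem phi_choi_eq_inner {dx de da : ℕ}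
    (Ψ : Matrix (Fin dx × Fin de) (Fin dx × Fin de) ℂ →ₗ[ℂ] Matrix (Fin da) (Fin da) ℂ)
    (Z : Matrix (Fin de) (Fin de) ℂ)
    (φ : Matrix (Fin da × Fin dx) (Fin da × Fin dx) ℂ →ₗ[ℂ] ℂ) :
    φ (ChoiLam Ψ Z) = (((Z.map (starRingEnd ℂ))ᴴ) * phiTensorId φ Ψ).trace := by
  rw [trace_map_starRingEnd_conjTranspose_mul, choiLam_eq_sum_smul]
  simp only [map_sum, map_smul, smul_eq_mul, phiTensorId, of_apply]
end
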